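/- In the Banach space c₀, let x_n = Σ_{i=1}^{n} δ_i for each n ∈ ℕ, where (δ_i) is the standard unit vector basis. Then the set {x_n : n ∈ ℕ} is (p,q)-multi-bounded in c₀ for every pair p,q with 1 ≤ p < q < ∞, but {x_n : n ∈ ℕ} is not relatively weakly compact (its closure in the weak topology of c₀ is not compact). -/

import Mathlib

/-!
Let `μ_{p,k}(λ) ≤ 1` and `aᵢ = |λᵢ(x_{nᵢ})|`. If `w_r` are indicators of pairwise disjoint
intervals, every signed sum `∑ ±w_r` lies in the unit ball, so averaging over the signs gives
`∑ᵢ |λᵢ(w_{r(i)})|^p ≤ 1` for every choice of `r`. Ranking the values `nᵢ`, `i ∈ S`, and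
expanding the ranks in binary writes each `x_{nᵢ}` as a sum of at most one block per dyadic
level, the blocks of one level being disjoint; when `#S ≤ 2^M` there are `M + 1` levels, so
Hölder's inequality gives `∑_{i ∈ S} aᵢ^p ≤ (M + 1)^p`. This logarithmic growth
forces `#{i | t ≤ aᵢ} ≤ K t^{-ρ}` for any `ρ > p`, and summing over dyadic levels of `t`
bounds `∑ aᵢ^q` once `q > ρ`.

Along `(x_n)` every coordinate functional is eventually `1`, so a weak cluster point would be
the constant sequence `1`, which does not vanish at infinity.
-/

open ZeroAtInfty NormedSpace

/-- The standard basis vector `δₙ` of `c₀ = C₀(ℕ, ℂ)`. -/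
noncomputable def c0delta (n : ℕ) : C₀(ℕ, ℂ) :=
  ⟨⟨fun m => if m = n then 1 else 0, continuous_of_discreteTopology⟩, by
    simp only [ContinuousMap.coe_mk]
    rw [Filter.cocompact_eq_cofinite ℕ]
    apply Filter.Tendsto.congr' (f₁ := fun _ => (0 : ℂ))
    · rw [Filter.eventuallyEq_iff_exists_mem]
      exact ⟨{m | m ≠ n}, by simp [Filter.mem_cofinite], fun m hm => (if_neg hm).symm⟩
    · exact tendsto_const_nhds⟩

/-- The weak `p`-summing norm `μ_{p,n}` of a tuple of functionals on `E`,
computed over the unit ball of `E`. -/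
noncomputable def muPN {E : Type*} [NormedAddCommGroup E] [NormedSpace ℂ E]
    (p : ℝ) {n : ℕ} (lam : Fin n → StrongDual ℂ E) : ℝ :=
  sSup {r : ℝ | ∃ x : E, ‖x‖ ≤ 1 ∧ r = (∑ i, ‖lam i x‖ ^ p) ^ (1 / p)}

/-- The `(p,q)`-multi-norm of a tuple `(x₁,…,xₙ)` in `E`. -/
noncomputable def pqNorm {E : Type*} [NormedAddCommGroup E] [NormedSpace ℂ E]
    (p q : ℝ) {n : ℕ} (x : Fin n → E) : ℝ :=
  sSup {r : ℝ | ∃ lam : Fin n → StrongDual ℂ E, muPN p lam ≤ 1 ∧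
    r = (∑ i, ‖lam i (x i)‖ ^ q) ^ (1 / q)}

open Filter

namespace ZeroAtInftyContinuousMap

variable {α β : Type*} [TopologicalSpace α] [NormedAddCommGroup β]

variable (𝕜 : Type*) [NormedField 𝕜] [NormedSpace 𝕜 β] in
noncomputable def evalCLM (x : α) : C₀(α, β) →L[𝕜] β :=
  LinearMap.mkContinuous
    { toFun := fun f => f x
      map_add' := fun _ _ => rfl
      map_smul' := fun _ _ => rfl }
    1 fun f => by simpa [← norm_toBCF_eq_norm] using f.toBCF.norm_coe_le_norm x

variable (𝕜 : Type*) [NormedField 𝕜] [NormedSpace 𝕜 β] in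
@[simp]
lemma evalCLM_apply (x : α) (f : C₀(α, β)) : evalCLM 𝕜 x f = f x := rfl

lemma sum_apply {ι : Type*} (s : Finset ι) (f : ι → C₀(α, β)) (x : α) :
    (∑ j ∈ s, f j) x = ∑ j ∈ s, f j x :=
  map_sum (⟨⟨fun f : C₀(α, β) => f x, rfl⟩, fun _ _ => rfl⟩ : C₀(α, β) →+ β) f s

lemma norm_le_of_forall_norm_apply_le {f : C₀(α, β)} {C : ℝ} (hC : 0 ≤ C)
    (hf : ∀ x, ‖f x‖ ≤ C) : ‖f‖ ≤ C := by
  rw [← norm_toBCF_eq_norm]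
  exact (BoundedContinuousFunction.norm_le hC).2 hf

end ZeroAtInftyContinuousMap

noncomputable def c0PartialSum (n : ℕ) : C₀(ℕ, ℂ) := ∑ j ∈ Finset.range n, c0delta j

lemma c0PartialSum_apply (n m : ℕ) : c0PartialSum n m = if m < n then 1 else 0 := by
  simp [c0PartialSum, ZeroAtInftyContinuousMap.sum_apply, c0delta, eq_comm (a := m)]

lemma c0PartialSum_zero : c0PartialSum 0 = 0 := by simp [c0PartialSum]

lemma norm_c0PartialSum_le (n : ℕ) : ‖c0PartialSum n‖ ≤ 1 :=
  ZeroAtInftyContinuousMap.norm_le_of_forall_norm_apply_le zero_le_one fun m => by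
    rw [c0PartialSum_apply]; split_ifs <;> simp

lemma c0PartialSum_sub_apply {a b : ℕ} (hab : a ≤ b) (m : ℕ) :
    (c0PartialSum b - c0PartialSum a) m = if a ≤ m ∧ m < b then 1 else 0 := by
  rw [ZeroAtInftyContinuousMap.sub_apply, c0PartialSum_apply, c0PartialSum_apply]
  split_ifs <;> first | (exfalso; omega) | simp

lemma norm_sum_smul_c0PartialSum_sub_le {f : ℕ → ℕ} (hf : Monotone f) {R : ℕ} (ε : Fin R → ℂ)
    (hε : ∀ t, ‖ε t‖ ≤ 1) :
    ‖∑ t, ε t • (c0PartialSum (f (2 * t + 1)) - c0PartialSum (f (2 * t)))‖ ≤ 1 := by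
  classical
  refine ZeroAtInftyContinuousMap.norm_le_of_forall_norm_apply_le zero_le_one fun m => ?_
  set A := Finset.univ.filter fun t : Fin R => f (2 * t) ≤ m ∧ m < f (2 * t + 1)
  have hA : A.card ≤ 1 := by
    refine Finset.card_le_one.2 fun t ht t' ht' => ?_
    simp only [A, Finset.mem_filter] at ht ht'
    by_contra hne
    rcases lt_or_gt_of_ne (Fin.val_ne_of_ne hne) with h | h
    · have := hf (show 2 * (t : ℕ) + 1 ≤ 2 * t' by omega); omega
    · have := hf (show 2 * (t' : ℕ) + 1 ≤ 2 * t by omega); omega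
  have hval : (∑ t, ε t • (c0PartialSum (f (2 * t + 1)) - c0PartialSum (f (2 * t)))) m
      = ∑ t ∈ A, ε t := by
    simp only [ZeroAtInftyContinuousMap.sum_apply, ZeroAtInftyContinuousMap.smul_apply,
      c0PartialSum_sub_apply (hf (Nat.le_succ _)), smul_eq_mul, mul_ite, mul_one, mul_zero,
      Finset.sum_ite, Finset.sum_const_zero, add_zero, A]
  calc ‖(∑ t, ε t • (c0PartialSum (f (2 * t + 1)) - c0PartialSum (f (2 * t)))) m‖
      ≤ ∑ t ∈ A, ‖ε t‖ := hval ▸ norm_sum_le _ _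
    _ ≤ A.card := by simpa using Finset.sum_le_sum fun t (_ : t ∈ A) => hε t
    _ ≤ 1 := by exact_mod_cast hA

lemma two_mul_rpow_le_add_rpow {p a b c : ℝ} (hp : 1 ≤ p) (ha : 0 ≤ a) (hb : 0 ≤ b)
    (hc : 0 ≤ c) (h : 2 * a ≤ b + c) : 2 * a ^ p ≤ b ^ p + c ^ p := by
  have hmid : ((1 / 2 : ℝ) • b + (1 / 2 : ℝ) • c) ^ p ≤ (1 / 2 : ℝ) • b ^ p + (1 / 2 : ℝ) • c ^ p :=
    (convexOn_rpow hp).2 (Set.mem_Ici.2 hb) (Set.mem_Ici.2 hc) (by norm_num) (by norm_num)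
      (by norm_num)
  have hmono : a ^ p ≤ ((1 / 2 : ℝ) • b + (1 / 2 : ℝ) • c) ^ p :=
    Real.rpow_le_rpow ha (by simp only [smul_eq_mul]; linarith) (by linarith)
  simp only [smul_eq_mul] at hmid hmono
  linarith

theorem sum_rpow_norm_apply_le_one_of_forall_signs {𝕜 E ι τ : Type*} [RCLike 𝕜]
    [NormedAddCommGroup E] [NormedSpace 𝕜 E] [Fintype ι] [Fintype τ] [DecidableEq τ]
    {p : ℝ} (hp : 1 ≤ p) (lam : ι → StrongDual 𝕜 E)
    (H : ∀ y : E, ‖y‖ ≤ 1 → ∑ i, ‖lam i y‖ ^ p ≤ 1) (w : τ → E)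
    (hw : ∀ ε : τ → ℤˣ, ‖∑ t, ((ε t : ℤ) : 𝕜) • w t‖ ≤ 1) (r : ι → τ) :
    ∑ i, ‖lam i (w (r i))‖ ^ p ≤ 1 := by
  set z : (τ → ℤˣ) → E := fun ε => ∑ t, ((ε t : ℤ) : 𝕜) • w t
  have hpair : ∀ i, (Fintype.card (τ → ℤˣ) : ℝ) * ‖lam i (w (r i))‖ ^ p
      ≤ ∑ ε, ‖lam i (z ε)‖ ^ p := by
    intro i
    set negAt : (τ → ℤˣ) → (τ → ℤˣ) := fun ε => Function.update ε (r i) (-ε (r i))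
    have hnegAt : Function.Involutive negAt := fun ε => by simp [negAt]
    have hdiff : ∀ ε, z ε - z (negAt ε) = (2 * ((ε (r i) : ℤ) : 𝕜)) • w (r i) := by
      intro ε
      rw [← Finset.sum_sub_distrib, Finset.sum_eq_single (r i)]
      · simp [negAt, two_mul, add_smul]
      · intro t _ ht
        simp [negAt, Function.update_of_ne ht]
      · simp
    have hmid : ∀ ε, 2 * ‖lam i (w (r i))‖ ^ p ≤ ‖lam i (z ε)‖ ^ p + ‖lam i (z (negAt ε))‖ ^ p := by
      refine fun ε => two_mul_rpow_le_add_rpow hp (norm_nonneg _) (norm_nonneg _) (norm_nonneg _) ?_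
      calc 2 * ‖lam i (w (r i))‖ = ‖lam i (z ε - z (negAt ε))‖ := by
            rcases Int.units_eq_one_or (ε (r i)) with h | h <;> simp [hdiff, h]
        _ ≤ ‖lam i (z ε)‖ + ‖lam i (z (negAt ε))‖ := by rw [map_sub]; exact norm_sub_le _ _
    have hsum := Finset.sum_le_sum fun ε (_ : ε ∈ Finset.univ) => hmid ε
    rw [Finset.sum_add_distrib, Finset.sum_const, Finset.card_univ, nsmul_eq_mul,
      show ∑ ε, ‖lam i (z (negAt ε))‖ ^ p = ∑ ε, ‖lam i (z ε)‖ ^ p from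
        Equiv.sum_comp hnegAt.toPerm (fun ε => ‖lam i (z ε)‖ ^ p)] at hsum
    linarith
  have hcard : (0 : ℝ) < Fintype.card (τ → ℤˣ) := by exact_mod_cast Fintype.card_pos
  refine le_of_mul_le_mul_left ?_ hcard
  calc (Fintype.card (τ → ℤˣ) : ℝ) * ∑ i, ‖lam i (w (r i))‖ ^ p
      ≤ ∑ i, ∑ ε, ‖lam i (z ε)‖ ^ p := by
        rw [Finset.mul_sum]; exact Finset.sum_le_sum fun i _ => hpair i
    _ = ∑ ε, ∑ i, ‖lam i (z ε)‖ ^ p := Finset.sum_comm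
    _ ≤ ∑ _ε : τ → ℤˣ, (1 : ℝ) := Finset.sum_le_sum fun ε _ => H (z ε) (hw ε)
    _ = Fintype.card (τ → ℤˣ) * 1 := by simp

lemma sum_rpow_norm_apply_c0PartialSum_sub_le {ι : Type*} [Fintype ι] {p : ℝ} (hp : 1 ≤ p)
    (lam : ι → StrongDual ℂ C₀(ℕ, ℂ)) (H : ∀ y : C₀(ℕ, ℂ), ‖y‖ ≤ 1 → ∑ i, ‖lam i y‖ ^ p ≤ 1)
    {f : ℕ → ℕ} (hf : Monotone f) (u : ι → ℕ) :
    ∑ i, ‖lam i (c0PartialSum (f (u i)) - c0PartialSum (f (2 * (u i / 2))))‖ ^ p ≤ 1 := by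
  classical
  set R := Finset.univ.sup u + 1
  have hr : ∀ i, u i / 2 < R := fun i =>
    Nat.lt_succ_of_le ((Nat.div_le_self _ _).trans (Finset.le_sup (Finset.mem_univ i)))
  refine le_trans (Finset.sum_le_sum fun i _ => ?_)
    (sum_rpow_norm_apply_le_one_of_forall_signs hp lam H
      (fun t : Fin R => c0PartialSum (f (2 * t + 1)) - c0PartialSum (f (2 * t)))
      (fun ε => norm_sum_smul_c0PartialSum_sub_le hf _ fun t => by
        rcases Int.units_eq_one_or (ε t) with h | h <;> simp [h])
      fun i => ⟨u i / 2, hr i⟩)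
  refine Real.rpow_le_rpow (norm_nonneg _) ?_ (by linarith)
  -- the difference is `0` for even `u i` and the block number `u i / 2` for odd `u i`
  rcases Nat.even_or_odd' (u i) with ⟨k, hk | hk⟩
  · simp [hk]
  · simp [hk, Nat.mul_add_div two_pos]

lemma eq_sum_range_dyadic_sub {G : Type*} [AddCommGroup G] (F : ℕ → G) (hF : F 0 = 0)
    {T L : ℕ} (hT : T < 2 ^ L) :
    F T = ∑ m ∈ Finset.range L,
      (F (2 ^ m * (T / 2 ^ m)) - F (2 ^ m * (2 * (T / 2 ^ m / 2)))) := by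
  have hshift : ∀ m, 2 ^ m * (2 * (T / 2 ^ m / 2)) = 2 ^ (m + 1) * (T / 2 ^ (m + 1)) := by
    intro m; rw [Nat.div_div_eq_div_mul, ← pow_succ, pow_succ]; ring
  simp only [hshift]
  rw [Finset.sum_range_sub' (fun m => F (2 ^ m * (T / 2 ^ m))), Nat.div_eq_of_lt hT]
  simp [hF]

lemma exists_monotone_enum_of_finset (V : Finset ℕ) :
    ∃ d : ℕ → ℕ, Monotone d ∧ d 0 = 0 ∧ ∀ v ∈ V, ∃ T ≤ V.card, d T = v := by
  set W := insert 0 V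
  have hW : 0 < W.card := Finset.card_pos.2 ⟨0, Finset.mem_insert_self _ _⟩
  set e := W.orderEmbOfFin rfl
  refine ⟨fun l => e ⟨min l (W.card - 1), by omega⟩, fun a b hab => e.monotone ?_, ?_, ?_⟩
  · exact Fin.mk_le_mk.2 (min_le_min_right _ hab)
  · simp only [Nat.zero_min, e, Finset.orderEmbOfFin_zero _ hW]
    exact le_antisymm (Finset.min'_le W 0 (Finset.mem_insert_self _ _)) (Nat.zero_le _)
  · intro v hv
    have : v ∈ Set.range e := by
      rw [Finset.range_orderEmbOfFin]; exact Finset.mem_insert_of_mem hv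
    obtain ⟨j, rfl⟩ := this
    have hWV : W.card ≤ V.card + 1 := Finset.card_insert_le _ _
    exact ⟨j, by omega, congrArg e (Fin.ext (min_eq_left (by omega)))⟩

lemma sum_rpow_sum_range_le {ι : Type*} (S : Finset ι) {p : ℝ} (hp : 1 ≤ p) (L : ℕ)
    (B : ι → ℕ → ℝ) (hB : ∀ i m, 0 ≤ B i m) (hlevel : ∀ m, ∑ i ∈ S, B i m ^ p ≤ 1) :
    ∑ i ∈ S, (∑ m ∈ Finset.range L, B i m) ^ p ≤ (L : ℝ) ^ p := by
  rcases Nat.eq_zero_or_pos L with rfl | hL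
  · simp [Real.zero_rpow (by linarith : p ≠ 0)]
  calc ∑ i ∈ S, (∑ m ∈ Finset.range L, B i m) ^ p
      ≤ ∑ i ∈ S, (L : ℝ) ^ (p - 1) * ∑ m ∈ Finset.range L, B i m ^ p :=
        Finset.sum_le_sum fun i _ => by
          simpa using Real.rpow_sum_le_const_mul_sum_rpow_of_nonneg (s := Finset.range L) hp
            fun m _ => hB i m
    _ = (L : ℝ) ^ (p - 1) * ∑ m ∈ Finset.range L, ∑ i ∈ S, B i m ^ p := by
        rw [← Finset.mul_sum, Finset.sum_comm]
    _ ≤ (L : ℝ) ^ (p - 1) * L := by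
        gcongr
        simpa using Finset.sum_le_sum fun m (_ : m ∈ Finset.range L) => hlevel m
    _ = (L : ℝ) ^ p := by
        rw [Real.rpow_sub_one (by positivity), div_mul_cancel₀ _ (by positivity)]

theorem sum_rpow_norm_apply_c0PartialSum_le {ι : Type*} [Fintype ι] {p : ℝ} (hp : 1 ≤ p)
    (lam : ι → StrongDual ℂ C₀(ℕ, ℂ)) (H : ∀ y : C₀(ℕ, ℂ), ‖y‖ ≤ 1 → ∑ i, ‖lam i y‖ ^ p ≤ 1)
    (n : ι → ℕ) (S : Finset ι) {M : ℕ} (hS : S.card ≤ 2 ^ M) :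
    ∑ i ∈ S, ‖lam i (c0PartialSum (n i))‖ ^ p ≤ ((M : ℝ) + 1) ^ p := by
  classical
  -- replacing the `n i` by their ranks among the values of `n` on `S` leaves only `M + 1` levels
  obtain ⟨d, hd, hd0, hdV⟩ := exists_monotone_enum_of_finset (S.image n)
  choose! T hT hdT using fun i (hi : i ∈ S) => hdV (n i) (Finset.mem_image_of_mem n hi)
  set level : ℕ → ι → C₀(ℕ, ℂ) := fun m i =>
    c0PartialSum (d (2 ^ m * (T i / 2 ^ m))) - c0PartialSum (d (2 ^ m * (2 * (T i / 2 ^ m / 2))))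
  have hsplit : ∀ i ∈ S, c0PartialSum (n i) = ∑ m ∈ Finset.range (M + 1), level m i := by
    intro i hi
    rw [← hdT i hi]
    refine eq_sum_range_dyadic_sub (fun l => c0PartialSum (d l))
      (by simp [hd0, c0PartialSum_zero]) ?_
    calc T i ≤ 2 ^ M := (hT i hi).trans (Finset.card_image_le.trans hS)
      _ < 2 ^ (M + 1) := Nat.pow_lt_pow_succ one_lt_two
  have hlevel : ∀ m, ∑ i ∈ S, ‖lam i (level m i)‖ ^ p ≤ 1 := fun m =>
    (Finset.sum_le_sum_of_subset_of_nonneg (Finset.subset_univ S) fun _ _ _ => by positivity).trans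
      (sum_rpow_norm_apply_c0PartialSum_sub_le hp lam H
        (hd.comp fun _ _ h => Nat.mul_le_mul_left _ h) fun i => T i / 2 ^ m)
  calc ∑ i ∈ S, ‖lam i (c0PartialSum (n i))‖ ^ p
      ≤ ∑ i ∈ S, (∑ m ∈ Finset.range (M + 1), ‖lam i (level m i)‖) ^ p :=
        Finset.sum_le_sum fun i hi => Real.rpow_le_rpow (norm_nonneg _)
          (by rw [hsplit i hi, map_sum]; exact norm_sum_le _ _) (by linarith)
    _ ≤ ((M + 1 : ℕ) : ℝ) ^ p :=
        sum_rpow_sum_range_le S hp _ _ (fun _ _ => norm_nonneg _) hlevel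
    _ = ((M : ℝ) + 1) ^ p := by push_cast; rfl

lemma natLog_add_two_le_mul_rpow {δ : ℝ} (hδ : 0 < δ) {N : ℕ} (hN : 1 ≤ N) :
    (Nat.log 2 N : ℝ) + 2 ≤ (1 / (δ * Real.log 2) + 2) * (N : ℝ) ^ δ := by
  have hlog2 : 0 < Real.log 2 := Real.log_pos one_lt_two
  have hNδ : 1 ≤ (N : ℝ) ^ δ := Real.one_le_rpow (by exact_mod_cast hN) hδ.le
  have hlogb : (Nat.log 2 N : ℝ) ≤ (N : ℝ) ^ δ / (δ * Real.log 2) := by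
    calc (Nat.log 2 N : ℝ) ≤ Real.log N / Real.log 2 := by
          simpa [Real.logb] using Real.natLog_le_logb N 2
      _ ≤ (N : ℝ) ^ δ / δ / Real.log 2 := by
          gcongr; exact Real.log_natCast_le_rpow_div N hδ
      _ = (N : ℝ) ^ δ / (δ * Real.log 2) := by rw [div_div]
  calc (Nat.log 2 N : ℝ) + 2 ≤ (N : ℝ) ^ δ / (δ * Real.log 2) + 2 * (N : ℝ) ^ δ := by linarith
    _ = (1 / (δ * Real.log 2) + 2) * (N : ℝ) ^ δ := by ring

lemma sum_rpow_le_mul_card_rpow {ι : Type*} (a : ι → ℝ) {p δ : ℝ} (hp : 0 < p) (hδ : 0 < δ)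
    (h : ∀ (S : Finset ι) (M : ℕ), S.card ≤ 2 ^ M → ∑ i ∈ S, a i ^ p ≤ ((M : ℝ) + 1) ^ p)
    (S : Finset ι) :
    ∑ i ∈ S, a i ^ p ≤ (1 / (δ * Real.log 2) + 2) ^ p * (S.card : ℝ) ^ (δ * p) := by
  rcases S.eq_empty_or_nonempty with rfl | hS
  · simp only [Finset.sum_empty]; positivity
  have hN : 1 ≤ S.card := Finset.card_pos.2 hS
  calc ∑ i ∈ S, a i ^ p ≤ (((Nat.log 2 S.card + 1 : ℕ) : ℝ) + 1) ^ p :=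
        h S _ (Nat.lt_pow_succ_log_self one_lt_two _).le
    _ ≤ ((1 / (δ * Real.log 2) + 2) * (S.card : ℝ) ^ δ) ^ p := by
        gcongr
        push_cast
        linarith [natLog_add_two_le_mul_rpow hδ hN]
    _ = (1 / (δ * Real.log 2) + 2) ^ p * (S.card : ℝ) ^ (δ * p) := by
        rw [Real.mul_rpow (by positivity) (by positivity), ← Real.rpow_mul (by positivity)]

lemma card_filter_mul_rpow_le {ι : Type*} [Fintype ι] (a : ι → ℝ) {p ρ C : ℝ} (hp : 0 < p)
    (hpρ : p ≤ ρ) (hC : 0 ≤ C)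
    (h : ∀ S : Finset ι, ∑ i ∈ S, a i ^ p ≤ C * (S.card : ℝ) ^ (1 - p / ρ)) {t : ℝ} (ht : 0 < t) :
    ((Finset.univ.filter fun i => t ≤ a i).card : ℝ) * t ^ ρ ≤ C ^ (ρ / p) := by
  set S := Finset.univ.filter fun i => t ≤ a i
  set N : ℝ := (S.card : ℝ)
  have hρ : 0 < ρ := hp.trans_le hpρ
  rcases (show 0 ≤ N from Nat.cast_nonneg _).eq_or_lt with hN | hN
  · rw [← hN, zero_mul]; positivity
  have hcount : N * t ^ p ≤ C * N ^ (1 - p / ρ) :=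
    calc N * t ^ p = ∑ _i ∈ S, t ^ p := by simp [N]
      _ ≤ ∑ i ∈ S, a i ^ p := Finset.sum_le_sum fun i hi =>
          Real.rpow_le_rpow ht.le (Finset.mem_filter.1 hi).2 hp.le
      _ ≤ C * N ^ (1 - p / ρ) := h S
  have hweak : N ^ (p / ρ) * t ^ p ≤ C := by
    refine le_of_mul_le_mul_right ?_ (Real.rpow_pos_of_pos hN (1 - p / ρ))
    calc N ^ (p / ρ) * t ^ p * N ^ (1 - p / ρ) = N * t ^ p := by
          rw [mul_right_comm, ← Real.rpow_add hN, add_sub_cancel, Real.rpow_one]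
      _ ≤ C * N ^ (1 - p / ρ) := hcount
  calc N * t ^ ρ = (N ^ (p / ρ) * t ^ p) ^ (ρ / p) := by
        rw [Real.mul_rpow (by positivity) (by positivity), ← Real.rpow_mul hN.le,
          ← Real.rpow_mul ht.le, div_mul_div_cancel₀ hρ.ne', div_self hp.ne', Real.rpow_one,
          mul_div_cancel₀ _ hp.ne']
    _ ≤ C ^ (ρ / p) := Real.rpow_le_rpow (by positivity) hweak (by positivity)

lemma eventually_rpow_le_sum_dyadic {a q : ℝ} (ha0 : 0 ≤ a) (ha1 : a ≤ 1) (hq : 0 < q) :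
    ∀ᶠ J in atTop, a ^ q ≤ ∑ j ∈ Finset.range J,
      if (2⁻¹ : ℝ) ^ (j + 1) ≤ a then ((2⁻¹ : ℝ) ^ j) ^ q else 0 := by
  have hterm : ∀ j, 0 ≤ if (2⁻¹ : ℝ) ^ (j + 1) ≤ a then ((2⁻¹ : ℝ) ^ j) ^ q else 0 := fun j => by
    split_ifs <;> positivity
  rcases ha0.eq_or_lt with rfl | ha
  · exact Eventually.of_forall fun J => by
      rw [Real.zero_rpow hq.ne']; exact Finset.sum_nonneg fun j _ => hterm j
  obtain ⟨j, hlow, hhigh⟩ :=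
    exists_nat_pow_near_of_lt_one ha ha1 (y := (2⁻¹ : ℝ)) (by norm_num) (by norm_num)
  filter_upwards [eventually_gt_atTop j] with J hJ
  calc a ^ q ≤ ((2⁻¹ : ℝ) ^ j) ^ q := Real.rpow_le_rpow ha.le hhigh hq.le
    _ = if (2⁻¹ : ℝ) ^ (j + 1) ≤ a then ((2⁻¹ : ℝ) ^ j) ^ q else 0 := (if_pos hlow.le).symm
    _ ≤ _ := Finset.single_le_sum (fun j _ => hterm j) (Finset.mem_range.2 hJ)

lemma sum_rpow_le_of_card_filter_mul_rpow_le {ι : Type*} [Fintype ι] (a : ι → ℝ)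
    {ρ q K : ℝ} (hq : 0 < q) (hρq : ρ < q) (ha0 : ∀ i, 0 ≤ a i) (ha1 : ∀ i, a i ≤ 1)
    (h : ∀ t, 0 < t → ((Finset.univ.filter fun i => t ≤ a i).card : ℝ) * t ^ ρ ≤ K) :
    ∑ i, a i ^ q ≤ K * (2⁻¹ : ℝ) ^ (-ρ) / (1 - (2⁻¹ : ℝ) ^ (q - ρ)) := by
  classical
  set r : ℝ := (2⁻¹ : ℝ) ^ (q - ρ)
  have hr1 : r < 1 := Real.rpow_lt_one (by norm_num) (by norm_num) (by linarith)
  have hK : 0 ≤ K := le_trans (by positivity) (h 1 one_pos)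
  have hweight : ∀ j : ℕ,
      ((2⁻¹ : ℝ) ^ j) ^ q = (2⁻¹ : ℝ) ^ (-ρ) * r ^ j * ((2⁻¹ : ℝ) ^ (j + 1)) ^ ρ := by
    intro j
    simp only [r, ← Real.rpow_natCast, ← Real.rpow_mul (by norm_num : (0 : ℝ) ≤ 2⁻¹),
      ← Real.rpow_add (by norm_num : (0 : ℝ) < 2⁻¹)]
    congr 1; push_cast; ring
  obtain ⟨J, hJ⟩ :=
    (eventually_all.2 fun i => eventually_rpow_le_sum_dyadic (ha0 i) (ha1 i) hq).exists
  calc ∑ i, a i ^ q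
      ≤ ∑ i, ∑ j ∈ Finset.range J, if (2⁻¹ : ℝ) ^ (j + 1) ≤ a i then ((2⁻¹ : ℝ) ^ j) ^ q else 0 :=
        Finset.sum_le_sum fun i _ => hJ i
    _ = ∑ j ∈ Finset.range J, (2⁻¹ : ℝ) ^ (-ρ) * r ^ j *
          (((Finset.univ.filter fun i => (2⁻¹ : ℝ) ^ (j + 1) ≤ a i).card : ℝ) *
            ((2⁻¹ : ℝ) ^ (j + 1)) ^ ρ) := by
        rw [Finset.sum_comm]
        refine Finset.sum_congr rfl fun j _ => ?_
        rw [Finset.sum_ite, Finset.sum_const_zero, add_zero, Finset.sum_const, nsmul_eq_mul,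
          hweight]
        ring
    _ ≤ ∑ j ∈ Finset.range J, K * (2⁻¹ : ℝ) ^ (-ρ) * r ^ j :=
        Finset.sum_le_sum fun j _ => by
          have hj := h ((2⁻¹ : ℝ) ^ (j + 1)) (by positivity)
          have hc : 0 ≤ (2⁻¹ : ℝ) ^ (-ρ) * r ^ j := by positivity
          nlinarith
    _ ≤ K * (2⁻¹ : ℝ) ^ (-ρ) / (1 - r) := by
        rw [← Finset.mul_sum, div_eq_mul_inv]
        refine mul_le_mul_of_nonneg_left ?_ (by positivity)
        simpa using geom_sum_Ico_le_of_lt_one (m := 0) (n := J) (by positivity) hr1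

theorem exists_sum_rpow_le_of_sum_rpow_le_log {p q : ℝ} (hp : 0 < p) (hpq : p < q) :
    ∃ C : ℝ, 0 ≤ C ∧ ∀ {ι : Type} [Fintype ι] (a : ι → ℝ), (∀ i, 0 ≤ a i) → (∀ i, a i ≤ 1) →
      (∀ (S : Finset ι) (M : ℕ), S.card ≤ 2 ^ M → ∑ i ∈ S, a i ^ p ≤ ((M : ℝ) + 1) ^ p) →
      ∑ i, a i ^ q ≤ C := by
  set ρ := (p + q) / 2
  have hpρ : p < ρ := by simp only [ρ]; linarith
  have hρq : ρ < q := by simp only [ρ]; linarith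
  set δ := 1 / p - 1 / ρ
  have hδ : 0 < δ := sub_pos.2 (one_div_lt_one_div_of_lt hp hpρ)
  have hδp : δ * p = 1 - p / ρ := by simp only [δ]; field_simp
  set C₀ := (1 / (δ * Real.log 2) + 2) ^ p
  have hr : (2⁻¹ : ℝ) ^ (q - ρ) ≤ 1 := Real.rpow_le_one (by norm_num) (by norm_num) (by linarith)
  refine ⟨C₀ ^ (ρ / p) * (2⁻¹ : ℝ) ^ (-ρ) / (1 - (2⁻¹ : ℝ) ^ (q - ρ)),
    div_nonneg (by positivity) (sub_nonneg.2 hr), fun a ha0 ha1 h => ?_⟩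
  refine sum_rpow_le_of_card_filter_mul_rpow_le a (hp.trans hpq) hρq
    ha0 ha1 fun t ht => card_filter_mul_rpow_le a hp hpρ.le (by positivity) (fun S => ?_) ht
  rw [← hδp]
  exact sum_rpow_le_mul_card_rpow a hp hδ h S

lemma sum_rpow_le_one_of_muPN_le_one {E : Type*} [NormedAddCommGroup E] [NormedSpace ℂ E]
    {p : ℝ} (hp : 0 < p) {k : ℕ} (lam : Fin k → StrongDual ℂ E) (hmu : muPN p lam ≤ 1)
    {y : E} (hy : ‖y‖ ≤ 1) : ∑ i, ‖lam i y‖ ^ p ≤ 1 := by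
  have hbdd : BddAbove {r : ℝ | ∃ x : E, ‖x‖ ≤ 1 ∧ r = (∑ i, ‖lam i x‖ ^ p) ^ (1 / p)} := by
    refine ⟨(∑ i, ‖lam i‖ ^ p) ^ (1 / p), ?_⟩
    rintro _ ⟨x, hx, rfl⟩
    gcongr with i
    simpa using (lam i).le_opNorm_of_le hx
  have hroot : (∑ i, ‖lam i y‖ ^ p) ^ p⁻¹ ≤ 1 := by
    rw [← one_div]; exact (le_csSup hbdd ⟨y, hy, rfl⟩).trans hmu
  simpa using (Real.rpow_inv_le_iff_of_pos (by positivity) zero_le_one hp).1 hroot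

theorem exists_pqNorm_c0PartialSum_le {p q : ℝ} (hp : 1 ≤ p) (hpq : p < q) :
    ∃ C : ℝ, ∀ (k : ℕ) (n : Fin k → ℕ), pqNorm p q (fun i => c0PartialSum (n i)) ≤ C := by
  have hp0 : 0 < p := by linarith
  have hq0 : 0 < q := hp0.trans hpq
  obtain ⟨C, hC0, hC⟩ := exists_sum_rpow_le_of_sum_rpow_le_log hp0 hpq
  refine ⟨C ^ (1 / q), fun k n => Real.sSup_le ?_ (Real.rpow_nonneg hC0 _)⟩
  rintro _ ⟨lam, hmu, rfl⟩
  have H := fun y (hy : ‖y‖ ≤ 1) => sum_rpow_le_one_of_muPN_le_one hp0 lam hmu hy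
  have ha1 : ∀ i, ‖lam i (c0PartialSum (n i))‖ ≤ 1 := fun i => by
    by_contra! hlt
    have := (Finset.single_le_sum (fun j _ => by positivity) (Finset.mem_univ i)).trans
      (H _ (norm_c0PartialSum_le (n i)))
    exact (Real.one_lt_rpow hlt hp0).not_ge this
  exact Real.rpow_le_rpow (by positivity)
    (hC _ (fun i => norm_nonneg _) ha1 fun S M hS =>
      sum_rpow_norm_apply_c0PartialSum_le hp lam H n S hS) (by positivity)

lemma apply_eq_of_mapClusterPt_toWeakSpace {𝕜 E α : Type*} [NormedField 𝕜]
    [NormedAddCommGroup E] [NormedSpace 𝕜 E] {l : Filter α} {u : α → E} {y : WeakSpace 𝕜 E}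
    (hy : MapClusterPt y l fun a => toWeakSpace 𝕜 E (u a)) (f : StrongDual 𝕜 E) {c : 𝕜}
    (hf : ∀ᶠ a in l, f (u a) = c) : f ((toWeakSpace 𝕜 E).symm y) = c :=
  (isClosed_eq (WeakBilin.eval_continuous _ f) continuous_const).mem_of_mapClusterPt hy hf

theorem not_isCompact_closure_c0PartialSums :
    ¬ IsCompact
      (closure (toWeakSpace ℂ C₀(ℕ, ℂ) '' {y | ∃ n : ℕ, 1 ≤ n ∧ y = c0PartialSum n})) := by
  intro hK
  obtain ⟨y, -, hy⟩ := hK.exists_mapClusterPt_of_frequently (l := atTop)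
    (f := fun n => toWeakSpace ℂ C₀(ℕ, ℂ) (c0PartialSum (n + 1)))
    (Frequently.of_forall fun n => subset_closure ⟨_, ⟨n + 1, by omega, rfl⟩, rfl⟩)
  have hone : ∀ j, (toWeakSpace ℂ C₀(ℕ, ℂ)).symm y j = 1 := fun j =>
    apply_eq_of_mapClusterPt_toWeakSpace hy (ZeroAtInftyContinuousMap.evalCLM ℂ j)
      ((eventually_ge_atTop j).mono fun n hn => by simp [c0PartialSum_apply]; omega)
  obtain ⟨j, hj⟩ := (((toWeakSpace ℂ C₀(ℕ, ℂ)).symm y).zero_at_infty'.eventually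
    (Metric.ball_mem_nhds 0 one_pos)).exists
  simp [hone j] at hj

/-- in `c₀`, the set of partial sums `xₙ = δ₁ + ⋯ + δₙ` of the standard
basis is `(p,q)`-multi-bounded for every `1 ≤ p < q < ∞`, but it is not relatively
weakly compact. -/
theorem partial_sums_multibounded_not_weakly_compact :
    (∀ p q : ℝ, 1 ≤ p → p < q →
      ∃ C : ℝ, ∀ (k : ℕ) (x : Fin k → C₀(ℕ, ℂ)),
        (∀ i, x i ∈ {y : C₀(ℕ, ℂ) | ∃ n : ℕ, 1 ≤ n ∧ y = ∑ j ∈ Finset.range n, c0delta j}) →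
        pqNorm p q x ≤ C) ∧
    ¬ IsCompact (closure (toWeakSpace ℂ C₀(ℕ, ℂ) ''
        {y : C₀(ℕ, ℂ) | ∃ n : ℕ, 1 ≤ n ∧ y = ∑ j ∈ Finset.range n, c0delta j})) := by
  refine ⟨fun p q hp hpq => ?_, not_isCompact_closure_c0PartialSums⟩
  obtain ⟨C, hC⟩ := exists_pqNorm_c0PartialSum_le hp hpq
  refine ⟨C, fun k x hx => ?_⟩
  choose n _ hn using hx
  rw [show x = fun i => c0PartialSum (n i) from funext hn]
  exact hC k n
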